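/- Let V be a real Hilbert space and let u, u_app : [0,T] → V be differentiable curves. Set e(t) = u(t) − u_app(t) and suppose e satisfies e'(t) = F(u(t)) − F(u_app(t)) + r(t) for some Lipschitz map F : V → V and residual curve r : [0,T] → V. If β(t) is an upper bound for the local logarithmic Lipschitz constant L[F](u_app(t)) and α(t) = ‖r(t)‖, then for all t ∈ [0,T], ‖e(t)‖ ≤ ∫₀ᵗ α(s)·exp(∫ₛᵗ β(τ) dτ) ds + exp(∫₀ᵗ β(τ) dτ)·‖e(0)‖. -/

import Mathlib

/-!
Since `F` is Lipschitz, `e'` is bounded, so `‖e‖` is Lipschitz and hence absolutely continuous.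
Its derivative is `⟪e, e'⟫ / ‖e‖` (and `0` where `e` vanishes, since `‖e‖` is minimal there), so
the bound on the logarithmic Lipschitz constant gives `‖e‖' ≤ β ‖e‖ + α`. As `β` is merely
integrable, Grönwall's argument is run for absolutely continuous functions: `‖e‖ · exp (-∫₀ˢ β)` is
absolutely continuous with derivative at most `α · exp (-∫₀ˢ β)` almost everywhere, and the
fundamental theorem of calculus for absolutely continuous functions integrates this bound.
-/

open MeasureTheory Set Filter intervalIntegral
open scoped RealInnerProductSpace NNReal

theorem LipschitzOnWith.comp_absolutelyContinuousOnInterval {X Y : Type*} [PseudoMetricSpace X]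
    [PseudoMetricSpace Y] {g : X → Y} {f : ℝ → X} {K : ℝ≥0} {s : Set X} {a b : ℝ}
    (hg : LipschitzOnWith K g s) (hf : AbsolutelyContinuousOnInterval f a b)
    (hfs : MapsTo f (uIcc a b) s) :
    AbsolutelyContinuousOnInterval (g ∘ f) a b := by
  unfold AbsolutelyContinuousOnInterval at hf ⊢
  apply squeeze_zero' ?_ ?_ (by simpa using hf.const_mul (K : ℝ))
  · exact Eventually.of_forall fun _ ↦ Finset.sum_nonneg fun i _ ↦ dist_nonneg
  rw [eventually_inf_principal]
  filter_upwards with ⟨n, I⟩ hnI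
  simp only [AbsolutelyContinuousOnInterval.disjWithin, mem_ofPred_eq] at hnI
  rw [Finset.mul_sum]
  gcongr with i hi
  exact hg.dist_le_mul _ (hfs (hnI.1 i hi).1) _ (hfs (hnI.1 i hi).2)

theorem LocallyLipschitz.comp_absolutelyContinuousOnInterval {E Y : Type*}
    [SeminormedAddCommGroup E] [PseudoMetricSpace Y] {g : E → Y} {f : ℝ → E} {a b : ℝ}
    (hg : LocallyLipschitz g) (hf : AbsolutelyContinuousOnInterval f a b) :
    AbsolutelyContinuousOnInterval (g ∘ f) a b := by
  have hcpt : IsCompact (f '' uIcc a b) := isCompact_uIcc.image_of_continuousOn hf.continuousOn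
  obtain ⟨K, hK⟩ := hg.locallyLipschitzOn.exists_lipschitzOnWith_of_compact hcpt
  exact hK.comp_absolutelyContinuousOnInterval hf (mapsTo_image _ _)

theorem AbsolutelyContinuousOnInterval.le_gronwall_of_deriv_le {φ β γ : ℝ → ℝ} {a b : ℝ}
    (hab : a ≤ b) (hφ : AbsolutelyContinuousOnInterval φ a b)
    (hβ : IntervalIntegrable β volume a b) (hγ : IntervalIntegrable γ volume a b)
    (hderiv : ∀ᵐ x, x ∈ Icc a b → deriv φ x ≤ β x * φ x + γ x) :
    φ b ≤ (∫ s in a..b, γ s * Real.exp (∫ τ in s..b, β τ))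
      + Real.exp (∫ τ in a..b, β τ) * φ a := by
  set B : ℝ → ℝ := fun x ↦ ∫ τ in a..x, β τ
  have hE : AbsolutelyContinuousOnInterval (fun x ↦ Real.exp (-B x)) a b :=
    (Real.contDiff_exp.comp contDiff_neg).locallyLipschitz.comp_absolutelyContinuousOnInterval
      (hβ.absolutelyContinuousOnInterval_intervalIntegral left_mem_uIcc)
  have hdecay : ∀ᵐ x ∂volume.restrict (Icc a b),
      deriv (fun x ↦ φ x * Real.exp (-B x)) x ≤ γ x * Real.exp (-B x) := by
    rw [ae_restrict_iff' measurableSet_Icc]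
    filter_upwards [hφ.ae_differentiableAt, hβ.ae_hasDerivAt_integral, hderiv]
      with x hφx hBx hx hxI
    have hxu : x ∈ uIcc a b := Icc_subset_uIcc hxI
    have hprod : HasDerivAt (fun x ↦ φ x * Real.exp (-B x))
        (deriv φ x * Real.exp (-B x) + φ x * (Real.exp (-B x) * -β x)) x :=
      (hφx hxu).hasDerivAt.mul (hBx hxu a left_mem_uIcc).neg.exp
    rw [hprod.deriv]
    linarith [mul_le_mul_of_nonneg_right (hx hxI) (Real.exp_pos (-B x)).le]
  have hweight : ∀ s ∈ uIcc a b,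
      γ s * Real.exp (∫ τ in s..b, β τ) = Real.exp (B b) * (γ s * Real.exp (-B s)) := by
    intro s hs
    rw [← integral_interval_sub_left hβ (hβ.mono_set (uIcc_subset_uIcc_left hs)), sub_eq_add_neg,
      Real.exp_add]
    ring
  have hmono := integral_mono_ae_restrict hab (hφ.fun_mul hE).intervalIntegrable_deriv
    (hγ.mul_continuousOn hE.continuousOn) hdecay
  rw [(hφ.fun_mul hE).integral_deriv_eq_sub] at hmono
  rw [integral_congr hweight, intervalIntegral.integral_const_mul]
  have hBa : B a = 0 := integral_same
  simp only [hBa, neg_zero, Real.exp_zero, mul_one] at hmono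
  calc φ b = Real.exp (B b) * (φ b * Real.exp (-B b)) := by
        rw [mul_left_comm, ← Real.exp_add, add_neg_cancel, Real.exp_zero, mul_one]
    _ ≤ Real.exp (B b) * (φ a + ∫ s in a..b, γ s * Real.exp (-B s)) := by
        gcongr; linarith
    _ = _ := by ring

section InnerProductSpace

variable {V : Type*} [NormedAddCommGroup V] [InnerProductSpace ℝ V]

theorem inner_sub_map_sub_add_le {F : V → V} {x y ρ : V} {b : ℝ}
    (hF : x ≠ y → ⟪x - y, F x - F y⟫ ≤ b * ‖x - y‖ ^ 2) :
    ⟪x - y, F x - F y + ρ⟫ ≤ b * ‖x - y‖ ^ 2 + ‖ρ‖ * ‖x - y‖ := by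
  have hdrift : ⟪x - y, F x - F y⟫ ≤ b * ‖x - y‖ ^ 2 := by
    rcases eq_or_ne x y with rfl | h
    · simp
    · exact hF h
  rw [inner_add_right, mul_comm ‖ρ‖]
  linarith [real_inner_le_norm (x - y) ρ]

theorem deriv_norm_eq_inner_div_norm {e : ℝ → V} {e' : V} {x : ℝ} (he : HasDerivAt e e' x) :
    deriv (fun s ↦ ‖e s‖) x = ⟪e x, e'⟫ / ‖e x‖ := by
  rcases eq_or_ne (e x) 0 with h | h
  · have hmin : IsLocalMin (fun s ↦ ‖e s‖) x :=
      Eventually.of_forall fun s ↦ by simp [h]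
    simp [h, hmin.deriv_eq_zero]
  · have hsq := he.norm_sq.sqrt (by positivity)
    simp only [Real.sqrt_sq (norm_nonneg _)] at hsq
    rw [hsq.deriv]
    field_simp

theorem deriv_norm_le_of_inner_le {e : ℝ → V} {e' : V} {x b c : ℝ} (he : HasDerivAt e e' x)
    (hinner : ⟪e x, e'⟫ ≤ b * ‖e x‖ ^ 2 + c * ‖e x‖) (hc : 0 ≤ c) :
    deriv (fun s ↦ ‖e s‖) x ≤ b * ‖e x‖ + c := by
  rw [deriv_norm_eq_inner_div_norm he]
  rcases eq_or_ne (e x) 0 with h | h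
  · simpa [h] using hc
  · rw [div_le_iff₀ (norm_pos_iff.2 h)]
    linarith

end InnerProductSpace

theorem exists_lipschitzOnWith_of_hasDerivAt_of_norm_le {E : Type*} [NormedAddCommGroup E]
    [NormedSpace ℝ E] {f f' : ℝ → E} {g : ℝ → ℝ} {a b : ℝ}
    (hf : ∀ x ∈ Icc a b, HasDerivAt f (f' x) x) (hg : ContinuousOn g (Icc a b))
    (hbound : ∀ x ∈ Icc a b, ‖f' x‖ ≤ g x) :
    ∃ K, LipschitzOnWith K f (Icc a b) := by
  obtain ⟨C, hC⟩ := isCompact_Icc.exists_bound_of_continuousOn hg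
  refine ⟨C.toNNReal, (convex_Icc a b).lipschitzOnWith_of_nnnorm_hasDerivWithin_le
    (fun x hx ↦ (hf x hx).hasDerivWithinAt) fun x hx ↦ ?_⟩
  rw [← NNReal.coe_le_coe, coe_nnnorm]
  exact (hbound x hx).trans ((Real.le_norm_self _).trans ((hC x hx).trans C.le_coe_toNNReal))

theorem stmt_2_general {V : Type*} [NormedAddCommGroup V] [InnerProductSpace ℝ V]
    (T : ℝ) (F : V → V) (K : NNReal) (hF : LipschitzWith K F)
    (u uapp r : ℝ → V) (e : ℝ → V) (he : ∀ t, e t = u t - uapp t)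
    (e' : ℝ → V)
    (hderiv : ∀ t ∈ Icc (0 : ℝ) T, HasDerivAt e (e' t) t)
    (heq : ∀ t ∈ Icc (0 : ℝ) T, e' t = F (u t) - F (uapp t) + r t)
    (hr : Continuous r)
    (β : ℝ → ℝ) (hβint : IntervalIntegrable β volume 0 T)
    (hβ : ∀ t ∈ Icc (0 : ℝ) T, ∀ v : V, v ≠ uapp t →
      ⟪v - uapp t, F v - F (uapp t)⟫ ≤ β t * ‖v - uapp t‖ ^ 2)
    (α : ℝ → ℝ) (hα : ∀ t, α t = ‖r t‖) :
    ∀ t ∈ Icc (0 : ℝ) T,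
      ‖e t‖ ≤ (∫ s in (0 : ℝ)..t, α s * Real.exp (∫ τ in s..t, β τ))
        + Real.exp (∫ τ in (0 : ℝ)..t, β τ) * ‖e 0‖ := by
  obtain rfl : α = fun s ↦ ‖r s‖ := funext hα
  have hinner : ∀ s ∈ Icc (0 : ℝ) T, ⟪e s, e' s⟫ ≤ β s * ‖e s‖ ^ 2 + ‖r s‖ * ‖e s‖ := by
    intro s hs
    rw [heq s hs, he]
    exact inner_sub_map_sub_add_le (hβ s hs (u s))
  have he'bound : ∀ s ∈ Icc (0 : ℝ) T, ‖e' s‖ ≤ K * ‖e s‖ + ‖r s‖ := by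
    intro s hs
    rw [heq s hs, he]
    linarith [norm_add_le (F (u s) - F (uapp s)) (r s), hF.norm_sub_le (u s) (uapp s)]
  obtain ⟨L, hL⟩ := exists_lipschitzOnWith_of_hasDerivAt_of_norm_le hderiv
    ((continuousOn_const.mul (HasDerivAt.continuousOn hderiv).norm).add hr.norm.continuousOn)
    he'bound
  intro t ht
  have hAC : AbsolutelyContinuousOnInterval (fun s ↦ ‖e s‖) 0 t := by
    apply LipschitzOnWith.absolutelyContinuousOnInterval (K := 1 * L)
    rw [uIcc_of_le ht.1]
    exact lipschitzWith_one_norm.comp_lipschitzOnWith (hL.mono (Icc_subset_Icc_right ht.2))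
  refine hAC.le_gronwall_of_deriv_le ht.1 (hβint.mono_set ?_)
    (hr.norm.intervalIntegrable _ _) (Eventually.of_forall fun s hs ↦ ?_)
  · exact uIcc_subset_uIcc_left (Icc_subset_uIcc ht)
  · have hsT := Icc_subset_Icc_right ht.2 hs
    exact deriv_norm_le_of_inner_le (hderiv s hsT) (hinner s hsT) (norm_nonneg _)

/-- A posteriori error bound: if `e = u − u_app` satisfies
`e' = F(u) − F(u_app) + r`, `β t` bounds the local logarithmic Lipschitz constant
of `F` at `u_app t`, and `α t = ‖r t‖`, then
`‖e t‖ ≤ ∫₀ᵗ α s exp(∫ₛᵗ β) ds + exp(∫₀ᵗ β) ‖e 0‖`. -/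
theorem stmt_2 {V : Type*} [NormedAddCommGroup V] [InnerProductSpace ℝ V]
    [CompleteSpace V]
    (T : ℝ) (hT : 0 < T) (F : V → V) (K : NNReal) (hF : LipschitzWith K F)
    (u uapp r : ℝ → V) (e : ℝ → V) (he : ∀ t, e t = u t - uapp t)
    (e' : ℝ → V)
    (hderiv : ∀ t ∈ Icc (0 : ℝ) T, HasDerivAt e (e' t) t)
    (heq : ∀ t ∈ Icc (0 : ℝ) T, e' t = F (u t) - F (uapp t) + r t)
    (hr : Continuous r)
    (β : ℝ → ℝ) (hβint : IntervalIntegrable β volume 0 T)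
    (hβ : ∀ t ∈ Icc (0 : ℝ) T, ∀ v : V, v ≠ uapp t →
      ⟪v - uapp t, F v - F (uapp t)⟫ ≤ β t * ‖v - uapp t‖ ^ 2)
    (α : ℝ → ℝ) (hα : ∀ t, α t = ‖r t‖) :
    ∀ t ∈ Icc (0 : ℝ) T,
      ‖e t‖ ≤ (∫ s in (0 : ℝ)..t, α s * Real.exp (∫ τ in s..t, β τ))
        + Real.exp (∫ τ in (0 : ℝ)..t, β τ) * ‖e 0‖ :=
  stmt_2_general T F K hF u uapp r e he e' hderiv heq hr β hβint hβ α hα
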